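/- For each a ∈ Act and all processes p₁, p₂ of the recursion-free calculus CLL: a.(p₁ ∨ p₂) ⊑_RS a.p₁ □ a.p₂ if and only if p₁ and p₂ are uniform w.r.t. F (i.e., p₁ ∈ F if and only if p₂ ∈ F). -/

import Mathlib

open Classical

/-- Visible actions plus the invisible action τ. -/
inductive ActT (Act : Type) : Type where
  | act : Act → ActT Act
  | tau : ActT Act

/-- Processes of the recursion-free calculus CLL. -/
inductive Proc (Act : Type) : Type where
  | nil  : Proc Act                                -- 0
  | bot  : Proc Act                                -- ⊥
  | pre  : ActT Act → Proc Act → Proc Act          -- α.t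
  | ec   : Proc Act → Proc Act → Proc Act          -- t □ t
  | conj : Proc Act → Proc Act → Proc Act          -- t ∧ t
  | disj : Proc Act → Proc Act → Proc Act          -- t ∨ t
  | par  : Set Act → Proc Act → Proc Act → Proc Act -- t ∥_A t

namespace Proc

variable {Act : Type}

/-- Whether a process has a τ-transition (structural stratification used for
the negative premises of the SOS rules). -/
def hasTau : Proc Act → Prop
  | nil => False
  | bot => False
  | pre a _ => a = ActT.tau
  | ec t₁ t₂ => hasTau t₁ ∨ hasTau t₂
  | conj t₁ t₂ => hasTau t₁ ∨ hasTau t₂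
  | disj _ _ => True
  | par _ t₁ t₂ => hasTau t₁ ∨ hasTau t₂

/-- The transition relation, given by the SOS rules of CLL_R. -/
inductive Trans : Proc Act → ActT Act → Proc Act → Prop where
  | pre : Trans (pre α t) α t
  | ecL : Trans t₁ (ActT.act a) t₁' → ¬ hasTau t₂ →
      Trans (ec t₁ t₂) (ActT.act a) t₁'
  | ecR : ¬ hasTau t₁ → Trans t₂ (ActT.act a) t₂' →
      Trans (ec t₁ t₂) (ActT.act a) t₂'
  | ecTauL : Trans t₁ ActT.tau t₁' → Trans (ec t₁ t₂) ActT.tau (ec t₁' t₂)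
  | ecTauR : Trans t₂ ActT.tau t₂' → Trans (ec t₁ t₂) ActT.tau (ec t₁ t₂')
  | conjAct : Trans t₁ (ActT.act a) t₁' → Trans t₂ (ActT.act a) t₂' →
      Trans (conj t₁ t₂) (ActT.act a) (conj t₁' t₂')
  | conjTauL : Trans t₁ ActT.tau t₁' → Trans (conj t₁ t₂) ActT.tau (conj t₁' t₂)
  | conjTauR : Trans t₂ ActT.tau t₂' → Trans (conj t₁ t₂) ActT.tau (conj t₁ t₂')
  | disjL : Trans (disj t₁ t₂) ActT.tau t₁
  | disjR : Trans (disj t₁ t₂) ActT.tau t₂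
  | parTauL : Trans t₁ ActT.tau t₁' → Trans (par A t₁ t₂) ActT.tau (par A t₁' t₂)
  | parTauR : Trans t₂ ActT.tau t₂' → Trans (par A t₁ t₂) ActT.tau (par A t₁ t₂')
  | parL : a ∉ A → Trans t₁ (ActT.act a) t₁' → ¬ hasTau t₂ →
      Trans (par A t₁ t₂) (ActT.act a) (par A t₁' t₂)
  | parR : a ∉ A → ¬ hasTau t₁ → Trans t₂ (ActT.act a) t₂' →
      Trans (par A t₁ t₂) (ActT.act a) (par A t₁ t₂')
  | parSync : a ∈ A → Trans t₁ (ActT.act a) t₁' → Trans t₂ (ActT.act a) t₂' →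
      Trans (par A t₁ t₂) (ActT.act a) (par A t₁' t₂')

/-- The ready set I(p). -/
def ready (p : Proc Act) : Set (ActT Act) := {α | ∃ q, Trans p α q}

/-- p is stable if it has no τ-transition. -/
def Stable (p : Proc Act) : Prop := ∀ q, ¬ Trans p ActT.tau q

/-- The inconsistency predicate F, as the least predicate closed under the
predicative rules of CLL_R. -/
inductive Fp : Proc Act → Prop where
  | bot : Fp bot
  | pre : Fp t → Fp (pre α t)
  | disj : Fp t₁ → Fp t₂ → Fp (disj t₁ t₂)
  | ecL : Fp t₁ → Fp (ec t₁ t₂)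
  | ecR : Fp t₂ → Fp (ec t₁ t₂)
  | parL : Fp t₁ → Fp (par A t₁ t₂)
  | parR : Fp t₂ → Fp (par A t₁ t₂)
  | conjL : Fp t₁ → Fp (conj t₁ t₂)
  | conjR : Fp t₂ → Fp (conj t₁ t₂)
  | conjReady : Stable (conj t₁ t₂) → ready t₁ ≠ ready t₂ → Fp (conj t₁ t₂)
  | conjSucc : Trans (conj t₁ t₂) α s → (∀ y, Trans (conj t₁ t₂) α y → Fp y) →
      Fp (conj t₁ t₂)
  | conjStable :
      (∀ y, Relation.ReflTransGen (fun x z => Trans x ActT.tau z) (conj t₁ t₂) y →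
        Stable y → Fp y) →
      Fp (conj t₁ t₂)

/-- One τ-step with both endpoints consistent. -/
def tauStepF (p q : Proc Act) : Prop := Trans p ActT.tau q ∧ ¬ Fp p ∧ ¬ Fp q

/-- p ⇒_F| q : a sequence of τ-transitions from p to q, all states outside F,
with q stable. -/
def epsF (p q : Proc Act) : Prop :=
  Relation.ReflTransGen tauStepF p q ∧ ¬ Fp p ∧ ¬ Fp q ∧ Stable q

/-- p =a⇒_F| q. -/
def wkF (a : Act) (p q : Proc Act) : Prop :=
  ∃ r s, Relation.ReflTransGen tauStepF p r ∧ ¬ Fp p ∧ ¬ Fp r ∧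
    Trans r (ActT.act a) s ∧ ¬ Fp s ∧
    Relation.ReflTransGen tauStepF s q ∧ ¬ Fp q ∧ Stable q

/-- R is a stable ready simulation. -/
def StableRS (R : Proc Act → Proc Act → Prop) : Prop :=
  ∀ p q, R p q →
    Stable p ∧ Stable q ∧
    (¬ Fp p → ¬ Fp q) ∧
    (∀ a p', wkF a p p' → ∃ q', wkF a q q' ∧ R p' q') ∧
    (¬ Fp p → ready p = ready q)

/-- p ⊏̃_RS q. -/
def rsLT (p q : Proc Act) : Prop := ∃ R, StableRS R ∧ R p q

/-- p ⊑_RS q. -/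
def rsLE (p q : Proc Act) : Prop :=
  ∀ p', epsF p p' → ∃ q', epsF q q' ∧ rsLT p' q'

/-- p =_RS q. -/
def rsEq (p q : Proc Act) : Prop := rsLE p q ∧ rsLE q p

/-- Basic process terms T(Σ_B): no ⊥ and no ∧. -/
inductive Basic : Proc Act → Prop where
  | nil : Basic nil
  | pre : Basic t → Basic (pre α t)
  | disj : Basic t₁ → Basic t₂ → Basic (disj t₁ t₂)
  | ec : Basic t₁ → Basic t₂ → Basic (ec t₁ t₂)
  | par : Basic t₁ → Basic t₂ → Basic (par A t₁ t₂)

/-- General external choice □ over a finite sequence (left-nested). -/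
def ecList : List (Proc Act) → Proc Act
  | [] => nil
  | t :: ts => ts.foldl ec t

/-- General disjunction ⋁ over a nonempty finite sequence (left-nested). -/
def djList : List (Proc Act) → Proc Act
  | [] => bot
  | t :: ts => ts.foldl disj t

/-- □_{i<n} a_i.t_i for a sequence of prefixed terms. -/
def ecPre (l : List (Act × Proc Act)) : Proc Act :=
  ecList (l.map fun x => pre (ActT.act x.1) x.2)

/-- The expansion term E = ((□Ω₁) □ (□Ω₂)) □ (□Ω₃). -/
noncomputable def expTerm (A : Set Act) (l₁ l₂ : List (Act × Proc Act)) : Proc Act :=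
  ec (ec
      (ecList ((l₁.filter fun x => decide (x.1 ∉ A)).map
        fun x => pre (ActT.act x.1) (par A x.2 (ecPre l₂))))
      (ecList ((l₂.filter fun x => decide (x.1 ∉ A)).map
        fun x => pre (ActT.act x.1) (par A (ecPre l₁) x.2))))
    (ecList (l₁.flatMap fun x =>
      (l₂.filter fun y => decide (y.1 = x.1 ∧ x.1 ∈ A)).map
        fun y => pre (ActT.act x.1) (par A x.2 y.2)))

/-- Normal forms NF_B. -/
inductive NFB : Proc Act → Prop where
  | mk (ls : List (List (Act × Proc Act))) (hne : ls ≠ [])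
      (hnodup : ∀ l ∈ ls, (l.map Prod.fst).Nodup)
      (hsub : ∀ l ∈ ls, ∀ x ∈ l, NFB x.2) :
      NFB (djList (ls.map ecPre))

/-- NF = NF_B ∪ {⊥}. -/
def NF (p : Proc Act) : Prop := NFB p ∨ p = bot

/-- Derivability ⊢ t ≤ t' in the proof system AX_CLL. -/
inductive Deriv : Proc Act → Proc Act → Prop where
  | refl (t) : Deriv t t
  | trans : Deriv t t' → Deriv t' t'' → Deriv t t''
  | mono_pre : Deriv t t' → Deriv (pre α t) (pre α t')
  | mono_ec : Deriv s s' → Deriv t t' → Deriv (ec s t) (ec s' t')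
  | mono_conj : Deriv s s' → Deriv t t' → Deriv (conj s t) (conj s' t')
  | mono_disj : Deriv s s' → Deriv t t' → Deriv (disj s t) (disj s' t')
  | mono_par : Deriv s s' → Deriv t t' → Deriv (par A s t) (par A s' t')
  -- external choice
  | ec_comm : Deriv (ec x y) (ec y x)
  | ec_assoc₁ : Deriv (ec (ec x y) z) (ec x (ec y z))
  | ec_assoc₂ : Deriv (ec x (ec y z)) (ec (ec x y) z)
  | ec_idem₁ : Deriv (ec x x) x
  | ec_idem₂ : Deriv x (ec x x)
  | ec_nil₁ : Deriv (ec x nil) x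
  | ec_nil₂ : Deriv x (ec x nil)
  | ec_bot₁ : Deriv (ec x bot) bot
  | ec_bot₂ : Deriv bot (ec x bot)
  -- disjunction
  | disj_comm : Deriv (disj x y) (disj y x)
  | disj_assoc₁ : Deriv (disj x (disj y z)) (disj (disj x y) z)
  | disj_assoc₂ : Deriv (disj (disj x y) z) (disj x (disj y z))
  | disj_idem₁ : Deriv (disj x x) x
  | disj_idem₂ : Deriv x (disj x x)
  | disj_bot₁ : Deriv (disj x bot) x
  | disj_bot₂ : Deriv x (disj x bot)
  | disj_le : Deriv x (disj x y)
  -- conjunction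
  | conj_comm : Deriv (conj x y) (conj y x)
  | conj_idem₁ : Deriv (conj x x) x
  | conj_idem₂ : Deriv x (conj x x)
  | conj_bot₁ : Deriv (conj x bot) bot
  | conj_bot₂ : Deriv bot (conj x bot)
  -- prefixing
  | pre_bot₁ : Deriv (pre (ActT.act a) bot) bot
  | pre_bot₂ : Deriv bot (pre (ActT.act a) bot)
  | tau_pre₁ : Deriv (pre ActT.tau x) x
  | tau_pre₂ : Deriv x (pre ActT.tau x)
  -- parallel
  | par_comm : Deriv (par A x y) (par A y x)
  | par_bot₁ : Deriv (par A x bot) bot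
  | par_bot₂ : Deriv bot (par A x bot)
  -- distribution over disjunction
  | ds_ec : Deriv (ec x (disj y z)) (disj (ec x y) (ec x z))
  | ds_conj : Deriv (conj x (disj y z)) (disj (conj x y) (conj x z))
  | ds_par : Deriv (par A x (disj y z)) (disj (par A x y) (par A x z))
  | ds_pre : Basic x → Basic y →
      Deriv (pre (ActT.act a) (disj x y)) (ec (pre (ActT.act a) x) (pre (ActT.act a) y))
  -- external choice and conjunction
  | ecc1₁ (l₁ l₂ : List (Act × Proc Act)) :
      {a | a ∈ l₁.map Prod.fst} ≠ {a | a ∈ l₂.map Prod.fst} →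
      Deriv (conj (ecPre l₁) (ecPre l₂)) bot
  | ecc1₂ (l₁ l₂ : List (Act × Proc Act)) :
      {a | a ∈ l₁.map Prod.fst} ≠ {a | a ∈ l₂.map Prod.fst} →
      Deriv bot (conj (ecPre l₁) (ecPre l₂))
  | ecc2 (l : List (Act × Proc Act × Proc Act)) :
      Deriv (ecPre (l.map fun x => (x.1, conj x.2.1 x.2.2)))
            (conj (ecPre (l.map fun x => (x.1, x.2.1)))
                  (ecPre (l.map fun x => (x.1, x.2.2))))
  | ecc3 (l : List (Act × Proc Act × Proc Act)) :
      (l.map Prod.fst).Nodup →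
      Deriv (conj (ecPre (l.map fun x => (x.1, x.2.1)))
                  (ecPre (l.map fun x => (x.1, x.2.2))))
            (ecPre (l.map fun x => (x.1, conj x.2.1 x.2.2)))
  -- expansion
  | exp1 (A : Set Act) (l₁ l₂ : List (Act × Proc Act)) :
      Deriv (par A (ecPre l₁) (ecPre l₂)) (expTerm A l₁ l₂)
  | exp2 (A : Set Act) (l₁ l₂ : List (Act × Proc Act)) :
      (∀ x ∈ l₁, Basic x.2) → (∀ x ∈ l₂, Basic x.2) →
      Deriv (expTerm A l₁ l₂) (par A (ecPre l₁) (ecPre l₂))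

end Proc

/-!
Both sides are stable with ready set `{a}`, so `⊑_RS` reduces to: if the left side is
consistent, so is the right one, and then `⊏̃_RS` holds. The left side is in `F` iff both `pᵢ`
are, the right side iff one of them is; this gives necessity of uniformity. Conversely, a weak
`a`-move of `a.(p₁ ∨ p₂)` must pass through `p₁ ∨ p₂` into some `pᵢ`, which `a.p₁ □ a.p₂`
reaches directly, and from there on the identity on stable processes is a simulation.
-/

namespace Proc

variable {Act : Type}

section Basics

variable {α : ActT Act} {t t₁ t₂ p q : Proc Act}

lemma fp_pre_iff : Fp (pre α t) ↔ Fp t :=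
  ⟨fun h => by cases h; assumption, Fp.pre⟩

lemma fp_disj_iff : Fp (disj t₁ t₂) ↔ Fp t₁ ∧ Fp t₂ :=
  ⟨fun h => by cases h; exact ⟨‹_›, ‹_›⟩, fun h => Fp.disj h.1 h.2⟩

lemma fp_ec_iff : Fp (ec t₁ t₂) ↔ Fp t₁ ∨ Fp t₂ :=
  ⟨fun h => by cases h <;> simp [*], fun h => h.elim Fp.ecL Fp.ecR⟩

lemma not_hasTau_pre_act (a : Act) (t : Proc Act) : ¬ hasTau (pre (ActT.act a) t) := by
  simp [hasTau]

lemma stable_pre_act (a : Act) (t : Proc Act) : Stable (pre (ActT.act a) t) := by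
  intro q h; cases h

lemma Stable.ec (h₁ : Stable t₁) (h₂ : Stable t₂) : Stable (ec t₁ t₂) := by
  intro q h
  cases h with
  | ecTauL h => exact h₁ _ h
  | ecTauR h => exact h₂ _ h

lemma ready_pre : ready (pre α t) = {α} := by
  ext β
  constructor
  · rintro ⟨q, h⟩; cases h; rfl
  · rintro rfl; exact ⟨t, Trans.pre⟩

lemma ready_ec_pre_act (a : Act) (p₁ p₂ : Proc Act) :
    ready (ec (pre (ActT.act a) p₁) (pre (ActT.act a) p₂)) = {ActT.act a} := by
  ext β
  constructor
  · rintro ⟨q, h⟩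
    cases h with
    | ecL h => cases h; rfl
    | ecR _ h => cases h; rfl
    | ecTauL h => cases h
    | ecTauR h => cases h
  · rintro rfl
    exact ⟨p₁, Trans.ecL Trans.pre (not_hasTau_pre_act a p₂)⟩

lemma Stable.eq_of_reflTransGen (hp : Stable p) (h : Relation.ReflTransGen tauStepF p q) :
    q = p := by
  rcases h.cases_head with rfl | ⟨c, hc, -⟩
  · rfl
  · exact absurd hc.1 (hp c)

lemma Stable.epsF_iff (hp : Stable p) : epsF p q ↔ q = p ∧ ¬ Fp p := by
  constructor
  · rintro ⟨hpq, hF, -⟩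
    exact ⟨hp.eq_of_reflTransGen hpq, hF⟩
  · rintro ⟨rfl, hF⟩
    exact ⟨Relation.ReflTransGen.refl, hF, hF, hp⟩

lemma wkF.stable {a : Act} (h : wkF a p q) : Stable q := by
  obtain ⟨-, -, -, -, -, -, -, -, -, hq⟩ := h
  exact hq

end Basics

section Simulation

variable {p q : Proc Act}

lemma stableRS_rsLT : StableRS (rsLT (Act := Act)) := by
  rintro p q ⟨R, hR, hpq⟩
  obtain ⟨hp, hq, hF, hmove, hready⟩ := hR p q hpq
  refine ⟨hp, hq, hF, fun a p' hw => ?_, hready⟩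
  obtain ⟨q', hq', hR'⟩ := hmove a p' hw
  exact ⟨q', hq', R, hR, hR'⟩

lemma rsLT_of_forall_wkF (hp : Stable p) (hq : Stable q) (hF : ¬ Fp p → ¬ Fp q)
    (hmove : ∀ a p', wkF a p p' → ∃ q', wkF a q q' ∧ rsLT p' q')
    (hready : ¬ Fp p → ready p = ready q) : rsLT p q := by
  refine ⟨fun x y => (x = p ∧ y = q) ∨ rsLT x y, ?_, Or.inl ⟨rfl, rfl⟩⟩
  rintro x y (⟨rfl, rfl⟩ | hxy)
  · refine ⟨hp, hq, hF, fun a p' hw => ?_, hready⟩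
    obtain ⟨q', hq', hR'⟩ := hmove a p' hw
    exact ⟨q', hq', Or.inr hR'⟩
  · obtain ⟨hx, hy, hF, hmove, hready⟩ := stableRS_rsLT x y hxy
    refine ⟨hx, hy, hF, fun a p' hw => ?_, hready⟩
    obtain ⟨q', hq', hR'⟩ := hmove a p' hw
    exact ⟨q', hq', Or.inr hR'⟩

lemma rsLT_refl (hp : Stable p) : rsLT p p := by
  refine ⟨fun x y => x = y ∧ Stable x, ?_, rfl, hp⟩
  rintro x _ ⟨rfl, hx⟩
  exact ⟨hx, hx, id, fun a x' hw => ⟨x', hw, rfl, hw.stable⟩, fun _ => rfl⟩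

lemma rsLE_iff_of_stable (hp : Stable p) (hq : Stable q) :
    rsLE p q ↔ (¬ Fp p → ¬ Fp q ∧ rsLT p q) := by
  simp only [rsLE, hp.epsF_iff, hq.epsF_iff]
  constructor
  · intro h hF
    obtain ⟨q', ⟨rfl, hqF⟩, hpq⟩ := h p ⟨rfl, hF⟩
    exact ⟨hqF, hpq⟩
  · rintro h p' ⟨rfl, hF⟩
    exact ⟨q, ⟨rfl, (h hF).1⟩, (h hF).2⟩

end Simulation

section DistributivePrefix

variable (a : Act) (p₁ p₂ : Proc Act)

lemma wkF_ec_pre_act_of_wkF_pre_disj (hR : ¬ Fp (ec (pre (ActT.act a) p₁) (pre (ActT.act a) p₂)))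
    {b : Act} {p' : Proc Act} (h : wkF b (pre (ActT.act a) (disj p₁ p₂)) p') :
    wkF b (ec (pre (ActT.act a) p₁) (pre (ActT.act a) p₂)) p' := by
  obtain ⟨r, s, hchain, -, -, hrs, -, hsp', hp'F, hp'⟩ := h
  obtain rfl := (stable_pre_act a _).eq_of_reflTransGen hchain
  cases hrs with
  | pre =>
    rcases hsp'.cases_head with rfl | ⟨c, hstep, hrest⟩
    · exact absurd Trans.disjL (hp' p₁)
    · have hc : ¬ Fp c := hstep.2.2
      cases hstep.1 with
      | disjL =>
        exact ⟨_, p₁, .refl, hR, hR, Trans.ecL Trans.pre (not_hasTau_pre_act a p₂), hc, hrest,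
          hp'F, hp'⟩
      | disjR =>
        exact ⟨_, p₂, .refl, hR, hR, Trans.ecR (not_hasTau_pre_act a p₁) Trans.pre, hc, hrest,
          hp'F, hp'⟩

lemma rsLT_pre_disj_ec_pre_act (hR : ¬ Fp (ec (pre (ActT.act a) p₁) (pre (ActT.act a) p₂))) :
    rsLT (pre (ActT.act a) (disj p₁ p₂)) (ec (pre (ActT.act a) p₁) (pre (ActT.act a) p₂)) :=
  rsLT_of_forall_wkF (stable_pre_act a _) ((stable_pre_act a p₁).ec (stable_pre_act a p₂))
    (fun _ => hR)
    (fun _ p' hw => ⟨p', wkF_ec_pre_act_of_wkF_pre_disj a p₁ p₂ hR hw, rsLT_refl hw.stable⟩)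
    (fun _ => by rw [ready_pre, ready_ec_pre_act])

end DistributivePrefix

/-- a.(p₁ ∨ p₂) ⊑_RS a.p₁ □ a.p₂ iff p₁ and p₂ are uniform w.r.t. F. -/
theorem stmt9 {Act : Type} (a : Act) (p₁ p₂ : Proc Act) :
    rsLE (pre (ActT.act a) (disj p₁ p₂)) (ec (pre (ActT.act a) p₁) (pre (ActT.act a) p₂)) ↔
      (Fp p₁ ↔ Fp p₂) := by
  rw [rsLE_iff_of_stable (stable_pre_act a _) ((stable_pre_act a p₁).ec (stable_pre_act a p₂)),
    fp_pre_iff, fp_disj_iff, fp_ec_iff, fp_pre_iff, fp_pre_iff]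
  constructor
  · intro h
    by_contra hne
    exact (h (by tauto)).1 (by tauto)
  · intro huni hL
    have hR : ¬ (Fp p₁ ∨ Fp p₂) := by tauto
    exact ⟨hR, rsLT_pre_disj_ec_pre_act a p₁ p₂ (by rwa [fp_ec_iff, fp_pre_iff, fp_pre_iff])⟩

end Proc
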